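/- The constant function minimizes the L^q norm among mean-zero perturbations: let (X,μ) be a measure space with 0 < μ(X) < ∞, let q ≥ 2, and let φ ∈ L^q(μ) be real-valued with ∫ φ dμ = 0. Then ‖1+φ‖_{L^q} ≥ μ(X)^{1/q}, with equality if and only if φ = 0 almost everywhere. -/

import Mathlib

/-!
Bernoulli's inequality `|1 + t| ^ q ≥ 1 + q t` (strict for `t ≠ 0` when `q > 1`) integrates,
using `∫ φ = 0`, to `∫ |1 + φ| ^ q ≥ μ(X)`; equality forces the nonnegative gap
`|1 + φ| ^ q - (1 + q φ)` to vanish a.e., hence `φ = 0` a.e.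
-/

open MeasureTheory

lemma one_add_mul_le_abs_one_add_rpow {q : ℝ} (hq : 1 ≤ q) (t : ℝ) :
    1 + q * t ≤ |1 + t| ^ q := by
  rcases le_or_gt (-1) t with ht | ht
  · rw [abs_of_nonneg (by linarith)]
    exact one_add_mul_self_le_rpow_one_add ht hq
  · have hneg : 1 + q * t < 0 := by nlinarith
    exact hneg.le.trans (by positivity)

lemma abs_one_add_rpow_eq_one_add_mul_iff {q : ℝ} (hq : 1 < q) {t : ℝ} :
    |1 + t| ^ q = 1 + q * t ↔ t = 0 := by
  refine ⟨fun h => ?_, fun h => by simp [h]⟩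
  by_contra ht
  rcases le_or_gt (-1) t with ht' | ht'
  · rw [abs_of_nonneg (by linarith)] at h
    exact (one_add_mul_self_lt_rpow_one_add ht' ht hq).ne h.symm
  · have hneg : 1 + q * t < 0 := by nlinarith
    exact hneg.not_ge (h ▸ by positivity)

section MeanZero

variable {X : Type*} [MeasurableSpace X] {μ : Measure X} [IsFiniteMeasure μ] {q : ℝ}
  {φ : X → ℝ}

lemma integral_one_add_mul_of_integral_eq_zero (hφ : Integrable φ μ)
    (hmean : ∫ x, φ x ∂μ = 0) :
    ∫ x, 1 + q * φ x ∂μ = μ.real Set.univ := by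
  rw [integral_add (integrable_const _) (hφ.const_mul q), integral_const, integral_const_mul,
    hmean, smul_eq_mul, mul_one, mul_zero, add_zero]

lemma measureReal_univ_le_integral_abs_one_add_rpow (hq : 1 ≤ q) (hφ : Integrable φ μ)
    (hmean : ∫ x, φ x ∂μ = 0) (hint : Integrable (fun x => |1 + φ x| ^ q) μ) :
    μ.real Set.univ ≤ ∫ x, |1 + φ x| ^ q ∂μ := by
  rw [← integral_one_add_mul_of_integral_eq_zero (q := q) hφ hmean]
  exact integral_mono ((integrable_const _).add (hφ.const_mul q)) hint
    fun x => one_add_mul_le_abs_one_add_rpow hq (φ x)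

lemma integral_abs_one_add_rpow_eq_measureReal_univ_iff (hq : 1 < q) (hφ : Integrable φ μ)
    (hmean : ∫ x, φ x ∂μ = 0) (hint : Integrable (fun x => |1 + φ x| ^ q) μ) :
    ∫ x, |1 + φ x| ^ q ∂μ = μ.real Set.univ ↔ φ =ᵐ[μ] 0 := by
  rw [← integral_one_add_mul_of_integral_eq_zero (q := q) hφ hmean, eq_comm]
  refine (integral_eq_iff_of_ae_le ((integrable_const _).add (hφ.const_mul q)) hint
    (ae_of_all _ fun x => one_add_mul_le_abs_one_add_rpow hq.le (φ x))).trans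
      ⟨fun h => ?_, fun h => ?_⟩
  · filter_upwards [h] with x hx
    exact (abs_one_add_rpow_eq_one_add_mul_iff hq).1 hx.symm
  · filter_upwards [h] with x hx
    simp [hx]

end MeanZero

theorem one_add_mean_zero_lq_norm_ge {X : Type*} [MeasurableSpace X] (μ : Measure X)
    (hfin : μ Set.univ < ⊤) (q : ℝ) (hq : 2 ≤ q)
    (φ : X → ℝ) (hφ : MemLp φ (ENNReal.ofReal q) μ) (hmean : ∫ x, φ x ∂μ = 0) :
    (μ Set.univ).toReal ^ (1 / q) ≤ (eLpNorm (fun x => 1 + φ x) (ENNReal.ofReal q) μ).toReal ∧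
      ((eLpNorm (fun x => 1 + φ x) (ENNReal.ofReal q) μ).toReal =
          (μ Set.univ).toReal ^ (1 / q) ↔ φ =ᵐ[μ] 0) := by
  have : IsFiniteMeasure μ := ⟨hfin⟩
  have hq0 : 0 < q := by linarith
  have hq_toReal : (ENNReal.ofReal q).toReal = q := ENNReal.toReal_ofReal hq0.le
  have hφ1 : Integrable φ μ := hφ.integrable (ENNReal.one_le_ofReal.2 (by linarith))
  have hf : MemLp (fun x => 1 + φ x) (ENNReal.ofReal q) μ := (memLp_const (1 : ℝ)).add hφ
  have hint : Integrable (fun x => |1 + φ x| ^ q) μ := by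
    simpa only [hq_toReal, Real.norm_eq_abs] using hf.integrable_norm_rpow'
  have hnorm : (eLpNorm (fun x => 1 + φ x) (ENNReal.ofReal q) μ).toReal
      = (∫ x, |1 + φ x| ^ q ∂μ) ^ (1 / q) := by
    rw [toReal_eLpNorm hf.aestronglyMeasurable, lpNorm_eq_integral_norm_rpow_toReal
      (ENNReal.ofReal_pos.2 hq0).ne' ENNReal.ofReal_ne_top hf.aestronglyMeasurable, hq_toReal,
      one_div]
    simp only [Real.norm_eq_abs]
  have hle := measureReal_univ_le_integral_abs_one_add_rpow (by linarith) hφ1 hmean hint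
  rw [hnorm, ← measureReal_def]
  refine ⟨Real.rpow_le_rpow measureReal_nonneg hle (by positivity), ?_⟩
  rw [(Real.rpow_left_injOn (by positivity)).eq_iff (measureReal_nonneg.trans hle)
    measureReal_nonneg]
  exact integral_abs_one_add_rpow_eq_measureReal_univ_iff (by linarith) hφ1 hmean hint
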